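/- Under the two-stage randomized design, for every mechanism a with J_a ≥ 2, the between-cluster sample covariance satisfies E[σ̂_b²(1,0;a)] = σ_b²(1,0;a) − (1/J) Σ_{j=1}^J σ_j²(1,0;a)/n_j. -/

import Mathlib

/-!
Condition on the first-stage assignment `A`. Within a cluster the second stage is simple random
sampling, so `E[Ŷ_j(1) Ŷ_j(0) | A] = Ȳ_j(1) Ȳ_j(0) - σ_j²(1,0) / n_j` (Neyman), while distinct
clusters are independent, so `E[Ŷ_j(1) Ŷ_k(0) | A] = Ȳ_j(1) Ȳ_k(0)`. A sample covariance over `c`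
units is (diagonal sum) / c - (off-diagonal sum) / (c (c - 1)). Over the first stage a cluster
has mechanism `a` with probability `J_a / J` and an ordered pair of clusters with probability
`J_a (J_a - 1) / (J (J - 1))`, which turns the conditional expectation of `σ̂_b²(1,0;a)` into
the same decomposition of `σ_b²(1,0;a)`, minus `(1/J) ∑_j σ_j²(1,0;a) / n_j`. All inclusion
probabilities come from one double-counting argument for permutation-invariant designs.
-/

open scoped BigOperators

noncomputable section

/-- A two-stage randomized design: `J` clusters, the `j`-th of size `n j`,
`m` treatment assignment mechanisms, `Jc a` clusters assigned to mechanism `a`,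
`n1 j a` treated units in cluster `j` under mechanism `a`, and fixed potential
outcomes `Y j i z a` (with `z : Bool`, `true` = treatment). -/
structure TwoStageDesign where
  J : ℕ
  m : ℕ
  n : Fin J → ℕ
  Jc : Fin m → ℕ
  n1 : Fin J → Fin m → ℕ
  Y : (j : Fin J) → Fin (n j) → Bool → Fin m → ℝ

namespace TwoStageDesign

variable (d : TwoStageDesign)

/-- The number of units in cluster `j` assigned to condition `z` under mechanism `a`. -/
def nz (z : Bool) (j : Fin d.J) (a : Fin d.m) : ℕ :=
  if z then d.n1 j a else d.n j - d.n1 j a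

/-- Admissible first-stage assignments: mechanism `a` is given to exactly `Jc a` clusters. -/
def mechA : Finset (Fin d.J → Fin d.m) :=
  Finset.univ.filter fun A => ∀ a, (Finset.univ.filter fun j => A j = a).card = d.Jc a

/-- Admissible second-stage assignments given the first stage `A`: the treated set in
cluster `j` has exactly `n1 j (A j)` units. -/
def treatA (A : Fin d.J → Fin d.m) : Finset ((j : Fin d.J) → Finset (Fin (d.n j))) :=
  Finset.univ.filter fun S => ∀ j, (S j).card = d.n1 j (A j)

/-- Expectation with respect to the two-stage randomization: `A` is uniform on the
admissible first-stage assignments and, given `A`, the treated sets are uniform on the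
admissible second-stage assignments (independently across clusters). -/
def expec (f : (Fin d.J → Fin d.m) → ((j : Fin d.J) → Finset (Fin (d.n j))) → ℝ) : ℝ :=
  ∑ A ∈ d.mechA, ∑ S ∈ d.treatA A,
    f A S / ((d.mechA.card : ℝ) * ((d.treatA A).card : ℝ))

/-- Covariance under the two-stage randomization. -/
def cov (f g : (Fin d.J → Fin d.m) → ((j : Fin d.J) → Finset (Fin (d.n j))) → ℝ) : ℝ :=
  d.expec fun A S => (f A S - d.expec f) * (g A S - d.expec g)

/-- Variance under the two-stage randomization. -/
def var (f : (Fin d.J → Fin d.m) → ((j : Fin d.J) → Finset (Fin (d.n j))) → ℝ) : ℝ :=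
  d.cov f f

/-- Observed outcome of unit `i` in cluster `j`: `Y_{ij} = Y_{ij}(Z_{ij}, A_j)`. -/
def Yobs (A : Fin d.J → Fin d.m) (S : (j : Fin d.J) → Finset (Fin (d.n j)))
    (j : Fin d.J) (i : Fin (d.n j)) : ℝ :=
  d.Y j i (decide (i ∈ S j)) (A j)

/-- `Ŷ_j(z)`: average observed outcome among units of cluster `j` with `Z_{ij} = z`. -/
def hatYj (A : Fin d.J → Fin d.m) (S : (j : Fin d.J) → Finset (Fin (d.n j)))
    (z : Bool) (j : Fin d.J) : ℝ :=
  (∑ i ∈ Finset.univ.filter (fun i => decide (i ∈ S j) = z), d.Yobs A S j i) /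
    ((Finset.univ.filter (fun i : Fin (d.n j) => decide (i ∈ S j) = z)).card : ℝ)

/-- `Ŷ(z,a)`: average of `Ŷ_j(z)` over clusters with `A_j = a`. -/
def hatY (A : Fin d.J → Fin d.m) (S : (j : Fin d.J) → Finset (Fin (d.n j)))
    (z : Bool) (a : Fin d.m) : ℝ :=
  (∑ j ∈ Finset.univ.filter (fun j => A j = a), d.hatYj A S z j) / (d.Jc a : ℝ)

/-- `Ȳ_j(z,a)`: cluster-level average potential outcome. -/
def Ybarj (j : Fin d.J) (z : Bool) (a : Fin d.m) : ℝ :=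
  (∑ i, d.Y j i z a) / (d.n j : ℝ)

/-- `Ȳ(z,a)`: population-level average potential outcome. -/
def Ybar (z : Bool) (a : Fin d.m) : ℝ :=
  (∑ j, d.Ybarj j z a) / (d.J : ℝ)

/-- `σ_j²(z,z';a,a')`: within-cluster covariance of the potential outcomes. -/
def sigU (j : Fin d.J) (z z' : Bool) (a a' : Fin d.m) : ℝ :=
  (∑ i, (d.Y j i z a - d.Ybarj j z a) * (d.Y j i z' a' - d.Ybarj j z' a')) /
    ((d.n j : ℝ) - 1)

/-- `σ_b²(z,z';a,a')`: between-cluster covariance of the cluster averages. -/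
def sigB (z z' : Bool) (a a' : Fin d.m) : ℝ :=
  (∑ j, (d.Ybarj j z a - d.Ybar z a) * (d.Ybarj j z' a' - d.Ybar z' a')) /
    ((d.J : ℝ) - 1)

/-- `σ̂_b²(z,z';a)`: between-cluster sample covariance among clusters with `A_j = a`. -/
def sigBhat (A : Fin d.J → Fin d.m) (S : (j : Fin d.J) → Finset (Fin (d.n j)))
    (z z' : Bool) (a : Fin d.m) : ℝ :=
  (∑ j ∈ Finset.univ.filter (fun j => A j = a),
      (d.hatYj A S z j - d.hatY A S z a) * (d.hatYj A S z' j - d.hatY A S z' a)) /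
    ((d.Jc a : ℝ) - 1)

end TwoStageDesign

open Finset

theorem offDiag_filter {ι : Type*} (s : Finset ι) (P : ι → Prop) [DecidablePred P] :
    (s.filter P).offDiag = s.offDiag.filter fun p => P p.1 ∧ P p.2 := by
  ext p
  simp only [mem_offDiag, mem_filter]
  tauto

section OffDiagonal
variable {ι : Type*} [DecidableEq ι]

theorem sum_mul_sum_eq_sum_mul_add_sum_offDiag (F : Finset ι) (u v : ι → ℝ) :
    (∑ j ∈ F, u j) * (∑ j ∈ F, v j) = ∑ j ∈ F, u j * v j + ∑ p ∈ F.offDiag, u p.1 * v p.2 := by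
  rw [sum_mul_sum, ← sum_product', ← diag_union_offDiag, sum_union (disjoint_diag_offDiag F),
    sum_diag]

theorem sample_cov_eq_diag_sub_offDiag (F : Finset ι) (hF : 2 ≤ #F) (u v : ι → ℝ) :
    (∑ j ∈ F, (u j - (∑ i ∈ F, u i) / #F) * (v j - (∑ i ∈ F, v i) / #F)) / (#F - 1) =
      (∑ j ∈ F, u j * v j) / #F - (∑ p ∈ F.offDiag, u p.1 * v p.2) / (#F * (#F - 1)) := by
  have hF' : (2 : ℝ) ≤ #F := by exact_mod_cast hF
  have hF₁ : (#F : ℝ) - 1 ≠ 0 := by linarith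
  have hcentered : ∑ j ∈ F, (u j - (∑ i ∈ F, u i) / #F) * (v j - (∑ i ∈ F, v i) / #F) =
      ∑ j ∈ F, u j * v j - (∑ j ∈ F, u j) * (∑ j ∈ F, v j) / #F := by
    simp only [sub_mul, mul_sub, sum_sub_distrib, ← sum_mul, ← mul_sum, sum_const, nsmul_eq_mul]
    field_simp
    ring
  rw [hcentered, sum_mul_sum_eq_sum_mul_add_sum_offDiag]
  field_simp
  ring

end OffDiagonal

section Exchangeability
variable {G X ι : Type*} [Group G] [MulAction G X] [MulAction G ι]
  (s : Finset X) (R : X → ι → Prop) [∀ x i, Decidable (R x i)]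

theorem card_filter_smul_eq (hs : ∀ g : G, ∀ x ∈ s, g • x ∈ s)
    (hR : ∀ (g : G) x i, R (g • x) (g • i) ↔ R x i) (g : G) (i : ι) :
    #{x ∈ s | R x (g • i)} = #{x ∈ s | R x i} := by
  refine card_nbij' (g⁻¹ • ·) (g • ·) (fun x hx => ?_) (fun x hx => ?_) (fun x _ => by simp)
    (fun x _ => by simp)
  · simp only [coe_filter] at hx ⊢
    refine ⟨hs _ _ hx.1, ?_⟩
    rw [← hR g, smul_inv_smul]
    exact hx.2
  · simp only [coe_filter] at hx ⊢
    exact ⟨hs _ _ hx.1, (hR g x i).2 hx.2⟩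

/- Symmetry makes `#{x ∈ s | R x i}` independent of `i ∈ t`; double counting the pairs
`(x, i)` with `R x i` then determines it. -/
theorem expect_sum_filter_of_exists_smul_eq (hs_ne : s.Nonempty)
    (hs : ∀ g : G, ∀ x ∈ s, g • x ∈ s) (hR : ∀ (g : G) x i, R (g • x) (g • i) ↔ R x i)
    (t : Finset ι) (ht : ∀ i ∈ t, ∀ i' ∈ t, ∃ g : G, g • i = i')
    (c : ℕ) (hc : ∀ x ∈ s, #{i ∈ t | R x i} = c) (w : ι → ℝ) :
    𝔼 x ∈ s, ∑ i ∈ t with R x i, w i = c / #t * ∑ i ∈ t, w i := by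
  obtain rfl | ⟨i₀, hi₀⟩ := t.eq_empty_or_nonempty
  · simp
  have hconst : ∀ i ∈ t, #{x ∈ s | R x i} = #{x ∈ s | R x i₀} := by
    intro i hi
    obtain ⟨g, rfl⟩ := ht i₀ hi₀ i hi
    exact card_filter_smul_eq s R hs hR g i₀
  have hcount : #{x ∈ s | R x i₀} * #t = #s * c :=
    calc #{x ∈ s | R x i₀} * #t = ∑ i ∈ t, #{x ∈ s | R x i} := by
          rw [sum_congr rfl hconst, sum_const, smul_eq_mul, mul_comm]
      _ = ∑ x ∈ s, #{i ∈ t | R x i} :=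
          (sum_card_bipartiteAbove_eq_sum_card_bipartiteBelow R).symm
      _ = #s * c := by rw [sum_congr rfl hc, sum_const, smul_eq_mul]
  have hswap : ∑ x ∈ s, ∑ i ∈ t with R x i, w i = ∑ i ∈ t, #{x ∈ s | R x i} * w i := by
    rw [sum_comm' (t' := t) (s' := fun i => {x ∈ s | R x i})
      fun x i => by simp only [mem_filter]; tauto]
    simp only [sum_const, nsmul_eq_mul]
  have hs₀ : (#s : ℝ) ≠ 0 := by exact_mod_cast hs_ne.card_pos.ne'
  have ht₀ : (#t : ℝ) ≠ 0 := by exact_mod_cast (card_pos.2 ⟨i₀, hi₀⟩).ne'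
  have hcount' : (#{x ∈ s | R x i₀} : ℝ) = #s * c / #t := by
    rw [eq_div_iff ht₀]
    exact_mod_cast hcount
  rw [expect_eq_sum_div_card, hswap, sum_congr rfl fun i hi => by rw [hconst i hi], ← mul_sum,
    hcount']
  field_simp

theorem exists_perm_smul_prod_eq {α : Type*} {p q : α × α} (hp : p.1 ≠ p.2) (hq : q.1 ≠ q.2) :
    ∃ σ : Equiv.Perm α, σ • p = q := by
  obtain ⟨σ, h₁, h₂⟩ := MulAction.is_two_pretransitive_iff.mp
    (Equiv.Perm.isMultiplyPretransitive α 2) hp hq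
  exact ⟨σ, Prod.ext h₁ h₂⟩

end Exchangeability

section SimpleRandomSampling
open scoped Pointwise
variable {α : Type*} [Fintype α] [DecidableEq α] {k : ℕ}

theorem smul_mem_powersetCard_univ (σ : Equiv.Perm α) {T : Finset α}
    (hT : T ∈ powersetCard k univ) : σ • T ∈ powersetCard k univ := by
  rw [mem_powersetCard_univ] at hT ⊢
  rwa [card_smul_finset]

theorem filter_offDiag_univ_eq_product_compl (T : Finset α) :
    {p ∈ (univ : Finset α).offDiag | p.1 ∈ T ∧ p.2 ∉ T} = T ×ˢ Tᶜ := by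
  ext ⟨i, l⟩
  simp only [mem_filter, mem_offDiag, mem_univ, mem_product, mem_compl, true_and]
  exact ⟨And.right, fun h => ⟨fun hil => h.2 (hil ▸ h.1), h⟩⟩

theorem expect_powersetCard_sum (hk : k ≤ Fintype.card α) (x : α → ℝ) :
    𝔼 T ∈ powersetCard k univ, ∑ i ∈ T, x i = k / Fintype.card α * ∑ i, x i := by
  have h := expect_sum_filter_of_exists_smul_eq (G := Equiv.Perm α) (powersetCard k univ)
    (fun T i => i ∈ T) (powersetCard_nonempty.2 (by simpa using hk))
    (fun σ _ => smul_mem_powersetCard_univ σ) (fun σ T i => smul_mem_smul_finset_iff σ)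
    univ (fun i _ i' _ => MulAction.exists_smul_eq _ i i') k
    (fun T hT => by simpa using mem_powersetCard_univ.1 hT) x
  simpa using h

theorem expect_powersetCard_sum_mul_sum_compl (hk : k ≤ Fintype.card α) (x y : α → ℝ) :
    𝔼 T ∈ powersetCard k univ, (∑ i ∈ T, x i) * (∑ i ∈ Tᶜ, y i) =
      k * (Fintype.card α - k) / (Fintype.card α * (Fintype.card α - 1)) *
        ∑ p ∈ (univ : Finset α).offDiag, x p.1 * y p.2 := by
  have h := expect_sum_filter_of_exists_smul_eq (G := Equiv.Perm α) (powersetCard k univ)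
    (fun T p => p.1 ∈ T ∧ p.2 ∉ T) (powersetCard_nonempty.2 (by simpa using hk))
    (fun σ _ => smul_mem_powersetCard_univ σ)
    (fun σ T p => by simp only [Prod.smul_fst, Prod.smul_snd, smul_mem_smul_finset_iff])
    univ.offDiag
    (fun p hp q hq => exists_perm_smul_prod_eq (mem_offDiag.1 hp).2.2 (mem_offDiag.1 hq).2.2)
    (k * (Fintype.card α - k))
    (fun T hT => by
      rw [filter_offDiag_univ_eq_product_compl, card_product, card_compl,
        mem_powersetCard_univ.1 hT])
    (fun p => x p.1 * y p.2)
  rw [offDiag_card, card_univ] at h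
  push_cast [Nat.cast_sub hk, Nat.cast_sub (Nat.le_mul_self _)] at h
  rw [mul_sub_one, ← h]
  refine expect_congr rfl fun T _ => ?_
  rw [filter_offDiag_univ_eq_product_compl, sum_product, sum_mul_sum]

theorem expect_powersetCard_expect (hk₀ : k ≠ 0) (hk : k ≤ Fintype.card α) (x : α → ℝ) :
    𝔼 T ∈ powersetCard k univ, 𝔼 i ∈ T, x i = 𝔼 i, x i := by
  have hk' : (k : ℝ) ≠ 0 := by exact_mod_cast hk₀
  have hN : (Fintype.card α : ℝ) ≠ 0 := by exact_mod_cast (hk₀.bot_lt.trans_le hk).ne'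
  calc 𝔼 T ∈ powersetCard k univ, 𝔼 i ∈ T, x i
      = (𝔼 T ∈ powersetCard k univ, ∑ i ∈ T, x i) / k := by
        rw [expect_div]
        exact expect_congr rfl fun T hT => by
          rw [expect_eq_sum_div_card, mem_powersetCard_univ.1 hT]
    _ = 𝔼 i, x i := by
        rw [expect_powersetCard_sum hk, expect_eq_sum_div_card, card_univ]
        field_simp

theorem expect_powersetCard_expect_compl (hk : k < Fintype.card α) (y : α → ℝ) :
    𝔼 T ∈ powersetCard k univ, 𝔼 i ∈ Tᶜ, y i = 𝔼 i, y i := by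
  rw [← expect_powersetCard_expect (k := Fintype.card α - k) (by omega) (by omega)]
  refine expect_nbij' compl compl (fun T hT => ?_) (fun T hT => ?_) (fun T _ => compl_compl T)
    (fun T _ => compl_compl T) (fun T _ => rfl)
  · rw [mem_powersetCard_univ] at hT ⊢
    rw [card_compl, hT]
  · rw [mem_powersetCard_univ] at hT ⊢
    rw [card_compl, hT]
    omega

theorem expect_powersetCard_expect_mul_expect_compl (hk₀ : k ≠ 0) (hk : k < Fintype.card α)
    (x y : α → ℝ) :
    𝔼 T ∈ powersetCard k univ, (𝔼 i ∈ T, x i) * 𝔼 i ∈ Tᶜ, y i =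
      (∑ i, x i) / Fintype.card α * ((∑ i, y i) / Fintype.card α) -
        (∑ i, (x i - (∑ i, x i) / Fintype.card α) * (y i - (∑ i, y i) / Fintype.card α)) /
          (Fintype.card α - 1) / Fintype.card α := by
  have hk' : (k : ℝ) ≠ 0 := by exact_mod_cast hk₀
  have hkN : (Fintype.card α : ℝ) - k ≠ 0 := sub_ne_zero.2 (by exact_mod_cast hk.ne')
  have hN : (2 : ℝ) ≤ Fintype.card α := by exact_mod_cast (by omega : 2 ≤ Fintype.card α)
  have hN₁ : (Fintype.card α : ℝ) - 1 ≠ 0 := by linarith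
  have hcov := sample_cov_eq_diag_sub_offDiag univ (by simp only [card_univ]; omega) x y
  rw [card_univ] at hcov
  have hmeans : ∀ T ∈ powersetCard k univ, (𝔼 i ∈ T, x i) * (𝔼 i ∈ Tᶜ, y i) =
      (∑ i ∈ T, x i) * (∑ i ∈ Tᶜ, y i) / (k * (Fintype.card α - k)) := by
    intro T hT
    rw [expect_eq_sum_div_card, expect_eq_sum_div_card, card_compl, mem_powersetCard_univ.1 hT,
      Nat.cast_sub hk.le, div_mul_div_comm]
  rw [expect_congr rfl hmeans, ← expect_div, expect_powersetCard_sum_mul_sum_compl hk.le, hcov,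
    div_mul_div_comm, sum_mul_sum_eq_sum_mul_add_sum_offDiag]
  field_simp
  ring

end SimpleRandomSampling

section Independence
variable {ι : Type*} [Fintype ι] [DecidableEq ι] {β : ι → Type*} (t : ∀ i, Finset (β i))

theorem expect_piFinset_prod (f : ∀ i, β i → ℝ) :
    𝔼 x ∈ Fintype.piFinset t, ∏ i, f i (x i) = ∏ i, 𝔼 b ∈ t i, f i b := by
  simp only [expect_eq_sum_div_card, Fintype.card_piFinset, ← prod_univ_sum, prod_div_distrib,
    Nat.cast_prod]

theorem expect_piFinset_apply (ht : ∀ i, (t i).Nonempty) (j : ι) (g : β j → ℝ) :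
    𝔼 x ∈ Fintype.piFinset t, g (x j) = 𝔼 b ∈ t j, g b := by
  set f := Function.update (fun i (_ : β i) => (1 : ℝ)) j g
  have hj : f j = g := by simp [f]
  have hother : ∀ i, i ≠ j → f i = fun _ => 1 := fun i hij => by
    simp [f, Function.update_of_ne hij]
  have h := expect_piFinset_prod t f
  rw [prod_eq_single j (fun i _ hi => by rw [hother i hi, expect_const (ht i)]) (by simp),
    hj] at h
  rw [← h]
  refine expect_congr rfl fun x _ => ?_
  rw [prod_eq_single j (fun i _ hi => by rw [hother i hi]) (by simp), hj]

theorem expect_piFinset_apply_mul_apply (ht : ∀ i, (t i).Nonempty) {j k : ι} (hjk : j ≠ k)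
    (g₁ : β j → ℝ) (g₂ : β k → ℝ) :
    𝔼 x ∈ Fintype.piFinset t, g₁ (x j) * g₂ (x k) = (𝔼 b ∈ t j, g₁ b) * 𝔼 b ∈ t k, g₂ b := by
  set f := Function.update (Function.update (fun i (_ : β i) => (1 : ℝ)) j g₁) k g₂
  have hj : f j = g₁ := by simp [f, Function.update_of_ne hjk]
  have hk : f k = g₂ := by simp [f]
  have hother : ∀ i, i ≠ j ∧ i ≠ k → f i = fun _ => 1 := by
    rintro i ⟨hij, hik⟩
    simp [f, Function.update_of_ne hij, Function.update_of_ne hik]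
  have h := expect_piFinset_prod t f
  rw [prod_eq_mul_of_mem j k (mem_univ _) (mem_univ _) hjk
    (fun i _ hi => by rw [hother i hi, expect_const (ht i)]), hj, hk] at h
  rw [← h]
  refine expect_congr rfl fun x _ => ?_
  rw [prod_eq_mul_of_mem j k (mem_univ _) (mem_univ _) hjk (fun i _ hi => by rw [hother i hi]),
    hj, hk]

end Independence

namespace TwoStageDesign

variable (d : TwoStageDesign)

theorem expec_eq_expect
    (f : (Fin d.J → Fin d.m) → ((j : Fin d.J) → Finset (Fin (d.n j))) → ℝ) :
    d.expec f = 𝔼 A ∈ d.mechA, 𝔼 S ∈ d.treatA A, f A S := by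
  simp only [expec, expect_eq_sum_div_card, sum_div, div_div, mul_comm]

section SecondStage

theorem hatYj_true (A : Fin d.J → Fin d.m) (S : (j : Fin d.J) → Finset (Fin (d.n j)))
    (j : Fin d.J) : d.hatYj A S true j = 𝔼 i ∈ S j, d.Y j i true (A j) := by
  have hS : ({i | decide (i ∈ S j) = true} : Finset (Fin (d.n j))) = S j := by ext; simp
  rw [hatYj, hS, expect_eq_sum_div_card]
  congr 1
  exact sum_congr rfl fun i hi => by simp [Yobs, hi]

theorem hatYj_false (A : Fin d.J → Fin d.m) (S : (j : Fin d.J) → Finset (Fin (d.n j)))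
    (j : Fin d.J) : d.hatYj A S false j = 𝔼 i ∈ (S j)ᶜ, d.Y j i false (A j) := by
  have hS : ({i | decide (i ∈ S j) = false} : Finset (Fin (d.n j))) = (S j)ᶜ := by ext; simp
  rw [hatYj, hS, expect_eq_sum_div_card]
  congr 1
  exact sum_congr rfl fun i hi => by simp [Yobs, mem_compl.1 hi]

theorem treatA_eq_piFinset (A : Fin d.J → Fin d.m) :
    d.treatA A = Fintype.piFinset fun j => powersetCard (d.n1 j (A j)) univ := by
  ext S
  simp [treatA, Fintype.mem_piFinset]

variable {d} {A : Fin d.J → Fin d.m}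

theorem expect_treatA_hatYj_mul_hatYj_self (hA : ∀ j, d.n1 j (A j) ≤ d.n j) {j : Fin d.J}
    (hj₀ : 0 < d.n1 j (A j)) (hj : d.n1 j (A j) < d.n j) :
    𝔼 S ∈ d.treatA A, d.hatYj A S true j * d.hatYj A S false j =
      d.Ybarj j true (A j) * d.Ybarj j false (A j) - d.sigU j true false (A j) (A j) / d.n j := by
  simp only [hatYj_true, hatYj_false, treatA_eq_piFinset]
  rw [expect_piFinset_apply (fun j => powersetCard (d.n1 j (A j)) (univ : Finset (Fin (d.n j))))
      (fun j => powersetCard_nonempty.2 (by simpa using hA j)) j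
      fun T : Finset (Fin (d.n j)) => (𝔼 i ∈ T, d.Y j i true (A j)) * 𝔼 i ∈ Tᶜ, d.Y j i false (A j),
    expect_powersetCard_expect_mul_expect_compl hj₀.ne' (by simpa using hj), Fintype.card_fin]
  rfl

theorem expect_treatA_hatYj_mul_hatYj_of_ne (hA : ∀ j, d.n1 j (A j) ≤ d.n j) {j k : Fin d.J}
    (hjk : j ≠ k) (hj₀ : 0 < d.n1 j (A j)) (hk : d.n1 k (A k) < d.n k) :
    𝔼 S ∈ d.treatA A, d.hatYj A S true j * d.hatYj A S false k =
      d.Ybarj j true (A j) * d.Ybarj k false (A k) := by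
  simp only [hatYj_true, hatYj_false, treatA_eq_piFinset]
  rw [expect_piFinset_apply_mul_apply
      (fun j => powersetCard (d.n1 j (A j)) (univ : Finset (Fin (d.n j))))
      (fun j => powersetCard_nonempty.2 (by simpa using hA j)) hjk
      (fun T : Finset (Fin (d.n j)) => 𝔼 i ∈ T, d.Y j i true (A j))
      fun T : Finset (Fin (d.n k)) => 𝔼 i ∈ Tᶜ, d.Y k i false (A k),
    expect_powersetCard_expect hj₀.ne' (by simpa using hA j),
    expect_powersetCard_expect_compl (by simpa using hk), Fintype.expect_eq_sum_div_card,
    Fintype.expect_eq_sum_div_card, Fintype.card_fin, Fintype.card_fin]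
  rfl

end SecondStage

section FirstStage

-- `σ • A = A ∘ σ⁻¹`: permutations of the clusters act on first-stage assignments.
attribute [local instance] arrowAction

theorem mem_mechA {A : Fin d.J → Fin d.m} : A ∈ d.mechA ↔ ∀ a, #{j | A j = a} = d.Jc a := by
  simp [mechA]

theorem smul_apply_smul (σ : Equiv.Perm (Fin d.J)) (A : Fin d.J → Fin d.m) (j : Fin d.J) :
    (σ • A) (σ • j) = A j :=
  congrArg A (inv_smul_smul σ j)

theorem smul_mem_mechA (σ : Equiv.Perm (Fin d.J)) {A : Fin d.J → Fin d.m} (hA : A ∈ d.mechA) :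
    σ • A ∈ d.mechA := by
  rw [mem_mechA] at hA ⊢
  intro a
  rw [← hA a, card_filter, card_filter]
  exact Equiv.sum_comp σ⁻¹ fun j => if A j = a then 1 else 0

theorem mechA_nonempty (hJsum : ∑ a, d.Jc a = d.J) : d.mechA.Nonempty := by
  let e : Fin d.J ≃ Σ a, Fin (d.Jc a) := Fintype.equivOfCardEq (by simp [hJsum])
  refine ⟨fun j => (e j).1, d.mem_mechA.2 fun a => ?_⟩
  rw [card_equiv e (t := {x | x.1 = a}) fun j => by simp, ← Fintype.card_subtype,
    Fintype.card_congr (Equiv.sigmaSubtype a), Fintype.card_fin]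

theorem expect_mechA_sum_filter (hJsum : ∑ a, d.Jc a = d.J) (a : Fin d.m) (w : Fin d.J → ℝ) :
    𝔼 A ∈ d.mechA, ∑ j with A j = a, w j = d.Jc a / d.J * ∑ j, w j := by
  have h := expect_sum_filter_of_exists_smul_eq (G := Equiv.Perm (Fin d.J)) d.mechA
    (fun A j => A j = a) (d.mechA_nonempty hJsum) (fun σ _ => d.smul_mem_mechA σ)
    (fun σ A j => by rw [smul_apply_smul]) univ (fun i _ i' _ => MulAction.exists_smul_eq _ i i')
    (d.Jc a) (fun A hA => d.mem_mechA.1 hA a) w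
  simpa using h

theorem expect_mechA_sum_offDiag (hJsum : ∑ a, d.Jc a = d.J) (a : Fin d.m)
    (w : Fin d.J × Fin d.J → ℝ) :
    𝔼 A ∈ d.mechA, ∑ p ∈ ({j | A j = a} : Finset (Fin d.J)).offDiag, w p =
      d.Jc a * (d.Jc a - 1) / (d.J * (d.J - 1)) *
        ∑ p ∈ (univ : Finset (Fin d.J)).offDiag, w p := by
  have h := expect_sum_filter_of_exists_smul_eq (G := Equiv.Perm (Fin d.J)) d.mechA
    (fun A p => A p.1 = a ∧ A p.2 = a) (d.mechA_nonempty hJsum) (fun σ _ => d.smul_mem_mechA σ)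
    (fun σ A p => by rw [Prod.smul_fst, Prod.smul_snd, smul_apply_smul, smul_apply_smul])
    univ.offDiag
    (fun p hp q hq => exists_perm_smul_prod_eq (mem_offDiag.1 hp).2.2 (mem_offDiag.1 hq).2.2)
    (d.Jc a * d.Jc a - d.Jc a)
    (fun A hA => by rw [← offDiag_filter univ (A · = a), offDiag_card, d.mem_mechA.1 hA a]) w
  simp only [offDiag_filter]
  rw [h, offDiag_card, card_univ, Fintype.card_fin]
  push_cast [Nat.cast_sub (Nat.le_mul_self _)]
  ring

end FirstStage

theorem sigBhat_eq {A : Fin d.J → Fin d.m} (hA : A ∈ d.mechA) {a : Fin d.m} (hJa : 2 ≤ d.Jc a)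
    (S : (j : Fin d.J) → Finset (Fin (d.n j))) (z z' : Bool) :
    d.sigBhat A S z z' a =
      (∑ j with A j = a, d.hatYj A S z j * d.hatYj A S z' j) / d.Jc a -
        (∑ p ∈ ({j | A j = a} : Finset (Fin d.J)).offDiag,
          d.hatYj A S z p.1 * d.hatYj A S z' p.2) / (d.Jc a * (d.Jc a - 1)) := by
  have hF := d.mem_mechA.1 hA a
  rw [sigBhat, hatY, hatY, ← hF]
  exact sample_cov_eq_diag_sub_offDiag _ (hF ▸ hJa) _ _

theorem sigB_eq (hJ : 2 ≤ d.J) (z z' : Bool) (a a' : Fin d.m) :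
    d.sigB z z' a a' =
      (∑ j, d.Ybarj j z a * d.Ybarj j z' a') / d.J -
        (∑ p ∈ (univ : Finset (Fin d.J)).offDiag, d.Ybarj p.1 z a * d.Ybarj p.2 z' a') /
          (d.J * (d.J - 1)) := by
  have h := sample_cov_eq_diag_sub_offDiag univ (by simpa using hJ) (d.Ybarj · z a)
    (d.Ybarj · z' a')
  rwa [card_univ, Fintype.card_fin] at h

theorem expect_treatA_sigBhat {A : Fin d.J → Fin d.m} (hA : A ∈ d.mechA)
    (hn1 : ∀ j, d.n1 j (A j) ≤ d.n j) {a : Fin d.m} (hJa : 2 ≤ d.Jc a)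
    (ha₀ : ∀ j, 0 < d.n1 j a) (ha : ∀ j, d.n1 j a < d.n j) :
    𝔼 S ∈ d.treatA A, d.sigBhat A S true false a =
      (∑ j with A j = a,
          (d.Ybarj j true a * d.Ybarj j false a - d.sigU j true false a a / d.n j)) / d.Jc a -
        (∑ p ∈ ({j | A j = a} : Finset (Fin d.J)).offDiag,
          d.Ybarj p.1 true a * d.Ybarj p.2 false a) / (d.Jc a * (d.Jc a - 1)) := by
  rw [expect_congr rfl fun S _ => d.sigBhat_eq hA hJa S true false, expect_sub_distrib,
    ← expect_div, ← expect_div, expect_sum_comm, expect_sum_comm]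
  congr 2
  · refine sum_congr rfl fun j hj => ?_
    obtain rfl := (mem_filter.1 hj).2
    exact expect_treatA_hatYj_mul_hatYj_self hn1 (ha₀ j) (ha j)
  · refine sum_congr rfl fun p hp => ?_
    obtain ⟨hp₁, hp₂, hp⟩ := mem_offDiag.1 hp
    have h₁ := (mem_filter.1 hp₁).2
    have h₂ := (mem_filter.1 hp₂).2
    rw [expect_treatA_hatYj_mul_hatYj_of_ne hn1 hp (h₁ ▸ ha₀ _) (h₂ ▸ ha _), h₁, h₂]

end TwoStageDesign

theorem expec_sigBhat_cov_general (d : TwoStageDesign)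
    (hJ : 2 ≤ d.J) (hJsum : ∑ a, d.Jc a = d.J)
    (hn1lo : ∀ j a, 1 ≤ d.n1 j a) (hn1hi : ∀ j a, d.n1 j a ≤ d.n j - 1)
    (a : Fin d.m) (hJa : 2 ≤ d.Jc a) :
    d.expec (fun A S => d.sigBhat A S true false a) =
      d.sigB true false a a - (1 / (d.J : ℝ)) * ∑ j, d.sigU j true false a a / (d.n j : ℝ) := by
  have hn1 : ∀ j a, d.n1 j a < d.n j := fun j a => by
    have := hn1lo j a
    have := hn1hi j a
    omega
  have hJa₀ : (d.Jc a : ℝ) ≠ 0 := by positivity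
  have hJa₁ : (d.Jc a : ℝ) - 1 ≠ 0 := sub_ne_zero.2 (by exact_mod_cast (by omega : d.Jc a ≠ 1))
  have hJ₀ : (d.J : ℝ) ≠ 0 := by positivity
  have hJ₁ : (d.J : ℝ) - 1 ≠ 0 := sub_ne_zero.2 (by exact_mod_cast (by omega : d.J ≠ 1))
  rw [d.expec_eq_expect, expect_congr rfl fun A hA => d.expect_treatA_sigBhat hA
      (fun j => (hn1 j (A j)).le) hJa (fun j => hn1lo j a) (fun j => hn1 j a),
    expect_sub_distrib, ← expect_div, ← expect_div, d.expect_mechA_sum_filter hJsum,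
    d.expect_mechA_sum_offDiag hJsum, d.sigB_eq hJ, sum_sub_distrib]
  field_simp
  ring

/-- **Expectation of the between-cluster sample covariance.** Under the two-stage
randomized design, for every mechanism `a` with `J_a ≥ 2`,
`E[σ̂_b²(1,0;a)] = σ_b²(1,0;a) − (1/J) ∑_j σ_j²(1,0;a)/n_j`. -/
theorem expec_sigBhat_cov (d : TwoStageDesign)
    (hJ : 2 ≤ d.J) (hn : ∀ j, 2 ≤ d.n j)
    (hJc : ∀ a, 1 ≤ d.Jc a) (hJsum : ∑ a, d.Jc a = d.J)
    (hn1lo : ∀ j a, 1 ≤ d.n1 j a) (hn1hi : ∀ j a, d.n1 j a ≤ d.n j - 1)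
    (a : Fin d.m) (hJa : 2 ≤ d.Jc a) :
    d.expec (fun A S => d.sigBhat A S true false a) =
      d.sigB true false a a - (1 / (d.J : ℝ)) * ∑ j, d.sigU j true false a a / (d.n j : ℝ) :=
  expec_sigBhat_cov_general d hJ hJsum hn1lo hn1hi a hJa
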